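/- Let n ≥ 1 and p ∈ ℝⁿ, set w = √(1+|p|²), and let γ be the symmetric n×n matrix γ = I − p pᵀ/(w(1+w)). Then γ (I + p pᵀ) γ = I, i.e. γ is the inverse square root of I + p pᵀ. Consequently, for a domain Ω ⊂ ℝⁿ and u ∈ C²(Ω) with u > 0, at each x ∈ Ω the matrix A[u](x) is positive definite if and only if the matrix I + Du Duᵀ + u D²u — which equals one half the Hessian of the function x ↦ u(x)² + |x|² — is positive definite; that is, the graph of u is locally strictly convex in ℍⁿ⁺¹ exactly when u² + |x|² is strictly convex. -/

import Mathlib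

/-!
With `P = p pᵀ` one has `P² = |p|² P`, so
`(I - cP)(I + P)(I - cP) = I + ((1 - c - c|p|²)(1 - c|p|²) - c) P`,
and `c = 1/(w(1+w))` is the root of that coefficient. Hence `A[u] = w⁻¹ γ (I + Du Duᵀ + u D²u) γ`
with `γ` symmetric and invertible, and a positive rescaling followed by a congruence preserves
positive definiteness. The identification with the Hessian of `u² + |x|²` is the product rule.
-/


open scoped Topology NNReal
open Filter Set

noncomputable section

/-- Euclidean `n`-space. -/
abbrev En (n : ℕ) := EuclideanSpace ℝ (Fin n)

/-- The positive cone `K⁺ₙ`. -/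
def posCone (n : ℕ) : Set (Fin n → ℝ) := {l | ∀ i, 0 < l i}

/-- A curvature function on the positive cone. -/
structure IsCurvatureFunction (n : ℕ) (f : (Fin n → ℝ) → ℝ) : Prop where
  smooth : ContDiffOn ℝ (⊤ : ℕ∞) f (posCone n)
  symm : ∀ (g : Equiv.Perm (Fin n)) (l : Fin n → ℝ), f (l ∘ g) = f l
  pos : ∀ l ∈ posCone n, 0 < f l
  zero_at_boundary : ∀ l₀ ∈ frontier (posCone n), Tendsto f (𝓝[posCone n] l₀) (𝓝 0)
  deriv_pos : ∀ l ∈ posCone n, ∀ i : Fin n, 0 < fderiv ℝ f l (Pi.single i 1)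
  concave : ConcaveOn ℝ (posCone n) f
  normalized : f (fun _ => 1) = 1
  homog : ∀ t : ℝ, 0 ≤ t → ∀ l ∈ posCone n, f (t • l) = t * f l

variable {n : ℕ}

/-- Gradient `Du` (components). -/
def Dg (u : En n → ℝ) (x : En n) : Fin n → ℝ :=
  fun i => fderiv ℝ u x (EuclideanSpace.single i 1)

/-- Hessian matrix `D²u`. -/
def Dh (u : En n → ℝ) (x : En n) : Matrix (Fin n) (Fin n) ℝ :=
  Matrix.of fun i j =>
    fderiv ℝ (fun y => fderiv ℝ u y (EuclideanSpace.single j 1)) x (EuclideanSpace.single i 1)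

/-- `w = √(1+|Du|²)`. -/
def wG (u : En n → ℝ) (x : En n) : ℝ := Real.sqrt (1 + ∑ i, Dg u x i ^ 2)

/-- The matrix `γ = (γ^{ij})`, the inverse square root of `I + Du Duᵀ`. -/
def gammaM (u : En n → ℝ) (x : En n) : Matrix (Fin n) (Fin n) ℝ :=
  1 - (wG u x * (1 + wG u x))⁻¹ • Matrix.of (fun i j => Dg u x i * Dg u x j)

/-- The matrix `A[u]` whose eigenvalues are the hyperbolic principal curvatures of
the graph of `u`. -/
def hypA (u : En n → ℝ) (x : En n) : Matrix (Fin n) (Fin n) ℝ :=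
  (wG u x)⁻¹ • (1 + u x • (gammaM u x * Dh u x * gammaM u x))

open Classical in
/-- Eigenvalues of a (symmetric) real matrix; junk value `0` if not symmetric. -/
def eigenvals {n : ℕ} (A : Matrix (Fin n) (Fin n) ℝ) : Fin n → ℝ :=
  if h : A.IsHermitian then h.eigenvalues else 0

/-- A solution of the asymptotic Plateau problem `f(κ) = σ` over `Ω`. -/
structure IsAPSolution (n : ℕ) (f : (Fin n → ℝ) → ℝ) (Ω : Set (En n)) (σ : ℝ)
    (u : En n → ℝ) : Prop where
  smooth : ContDiffOn ℝ (⊤ : ℕ∞) u Ω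
  cont : ContinuousOn u (closure Ω)
  pos : ∀ x ∈ Ω, 0 < u x
  bd : ∀ x ∈ frontier Ω, u x = 0
  posdef : ∀ x ∈ Ω, (hypA u x).PosDef
  curv_eq : ∀ x ∈ Ω, f (eigenvals (hypA u x)) = σ

section Extras

variable {n : ℕ}

/-- Uniform exterior ball condition with radius `r`. -/
def UnifExtBall (Ω : Set (En n)) (r : ℝ) : Prop :=
  ∀ p ∈ frontier Ω, ∃ c : En n, Metric.ball c r ∩ Ω = ∅ ∧ dist p c = r

/-- Uniform interior ball condition with radius `r`. -/
def UnifIntBall (Ω : Set (En n)) (r : ℝ) : Prop :=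
  ∀ p ∈ frontier Ω, ∃ c : En n, Metric.ball c r ⊆ Ω ∧ dist p c = r

/-- `ν` is the outward unit normal to `∂Ω` at `p`: near `p`, after writing points as
`p + v + tν` with `v` in the tangent hyperplane, `Ω` is the region `t < -φ(v)` for a `C¹`
function `φ` with `φ(0) = 0`, `Dφ(0) = 0`. -/
def IsOutwardNormalAt (Ω : Set (En n)) (p ν : En n) : Prop :=
  ‖ν‖ = 1 ∧ ∃ r : ℝ, 0 < r ∧ ∃ φ : ↥((Submodule.span ℝ {ν})ᗮ) → ℝ,
    φ 0 = 0 ∧ fderiv ℝ φ 0 = 0 ∧ ContDiffOn ℝ 1 φ (Metric.ball 0 r) ∧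
    ∀ y ∈ Metric.ball p r,
      (y ∈ Ω ↔ @inner ℝ _ _ (y - p) ν
          < - φ ((Submodule.orthogonalProjectionOnto ((Submodule.span ℝ {ν})ᗮ)) (y - p)))

/-- `Ω` has `C¹` boundary. -/
def HasC1Boundary (Ω : Set (En n)) : Prop :=
  ∀ p ∈ frontier Ω, ∃ ν : En n, IsOutwardNormalAt Ω p ν

/-- `Ω` has `C²` boundary: near every boundary point `p`, `Ω` is the region above the graph
of a `C²` function `φ` over the tangent hyperplane, where `ν` is the interior unit normal. -/
def HasC2Boundary (Ω : Set (En n)) : Prop :=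
  ∀ p ∈ frontier Ω, ∃ ν : En n, ‖ν‖ = 1 ∧ ∃ r : ℝ, 0 < r ∧
    ∃ φ : ↥((Submodule.span ℝ {ν})ᗮ) → ℝ,
      φ 0 = 0 ∧ fderiv ℝ φ 0 = 0 ∧ ContDiffOn ℝ 2 φ (Metric.ball 0 r) ∧
      ∀ y ∈ Metric.ball p r,
        (y ∈ Ω ↔ φ ((Submodule.orthogonalProjectionOnto ((Submodule.span ℝ {ν})ᗮ)) (y - p))
            < @inner ℝ _ _ (y - p) ν)

/-- `Ω` has `C^{2,α}` boundary: as `HasC2Boundary`, and additionally the second derivative of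
the graph function is Hölder continuous of some exponent `α ∈ (0,1]`. -/
def HasC2alphaBoundary (Ω : Set (En n)) : Prop :=
  ∀ p ∈ frontier Ω, ∃ ν : En n, ‖ν‖ = 1 ∧ ∃ r : ℝ, 0 < r ∧
    ∃ φ : ↥((Submodule.span ℝ {ν})ᗮ) → ℝ,
      φ 0 = 0 ∧ fderiv ℝ φ 0 = 0 ∧ ContDiffOn ℝ 2 φ (Metric.ball 0 r) ∧
      (∃ α C : ℝ≥0, 0 < α ∧ α ≤ 1 ∧
        @HolderOnWith _ _ _ (@ContinuousLinearMap.toNormedAddCommGroup ℝ ℝ _ _ _ _ _ _ _ _ (RingHom.id ℝ) _).toMetricSpace.toEMetricSpace.toPseudoEMetricSpace C α (fun v => fderiv ℝ (fun z => fderiv ℝ φ z) v) (Metric.ball 0 r)) ∧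
      ∀ y ∈ Metric.ball p r,
        (y ∈ Ω ↔ φ ((Submodule.orthogonalProjectionOnto ((Submodule.span ℝ {ν})ᗮ)) (y - p))
            < @inner ℝ _ _ (y - p) ν)

/-- `Ω` is a mean convex domain with `C^{2,α}` boundary: near every boundary point, `Ω` is the
region above the graph of a `C^{2,α}` function `φ` over the tangent hyperplane (`ν` being the
interior unit normal, `Dφ(0) = 0`), with `Δφ(0) ≥ 0`. -/
def IsMeanConvexC2alphaDomain (Ω : Set (En n)) : Prop :=
  ∀ p ∈ frontier Ω, ∃ ν : En n, ‖ν‖ = 1 ∧ ∃ r : ℝ, 0 < r ∧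
    ∃ φ : ↥((Submodule.span ℝ {ν})ᗮ) → ℝ,
      φ 0 = 0 ∧ fderiv ℝ φ 0 = 0 ∧ ContDiffOn ℝ 2 φ (Metric.ball 0 r) ∧
      (∃ α C : ℝ≥0, 0 < α ∧ α ≤ 1 ∧
        @HolderOnWith _ _ _ (@ContinuousLinearMap.toNormedAddCommGroup ℝ ℝ _ _ _ _ _ _ _ _ (RingHom.id ℝ) _).toMetricSpace.toEMetricSpace.toPseudoEMetricSpace C α (fun v => fderiv ℝ (fun z => fderiv ℝ φ z) v) (Metric.ball 0 r)) ∧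
      (∀ y ∈ Metric.ball p r,
        (y ∈ Ω ↔ φ ((Submodule.orthogonalProjectionOnto ((Submodule.span ℝ {ν})ᗮ)) (y - p))
            < @inner ℝ _ _ (y - p) ν)) ∧
      (∃ b : OrthonormalBasis (Fin (n - 1)) ℝ ↥((Submodule.span ℝ {ν})ᗮ),
        0 ≤ ∑ i, fderiv ℝ (fun z => fderiv ℝ φ z (b i)) 0 (b i))

/-- Gradient with respect to a set (`fderivWithin`), used for derivatives up to the boundary. -/
def DgW (s : Set (En n)) (u : En n → ℝ) (x : En n) : Fin n → ℝ :=
  fun i => fderivWithin ℝ u s x (EuclideanSpace.single i 1)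

end Extras
section DeSitter

variable {n : ℕ}

/-- `w = √(1−|Dv|²)` for a spacelike graph. -/
def wDS (v : En n → ℝ) (x : En n) : ℝ := Real.sqrt (1 - ∑ i, Dg v x i ^ 2)

/-- The matrix `Dv Dvᵀ`. -/
def dyad (v : En n → ℝ) (x : En n) : Matrix (Fin n) (Fin n) ℝ :=
  Matrix.of fun i j => Dg v x i * Dg v x j

/-- Induced (de Sitter) metric of the spacelike graph of `v`. -/
def gDS (v : En n → ℝ) (x : En n) : Matrix (Fin n) (Fin n) ℝ :=
  (v x ^ 2)⁻¹ • (1 - dyad v x)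

/-- Second fundamental form of the spacelike graph of `v`. -/
def hDS (v : En n → ℝ) (x : En n) : Matrix (Fin n) (Fin n) ℝ :=
  (v x ^ 2 * wDS v x)⁻¹ • (1 - dyad v x - v x • Dh v x)

open Classical in
/-- `g^{-1/2} h g^{-1/2}`, whose eigenvalues are the de Sitter principal curvatures
of the spacelike graph of `v` (junk value `0` if `g` is not positive semidefinite). -/
def ADS (v : En n → ℝ) (x : En n) : Matrix (Fin n) (Fin n) ℝ :=
  if hg : (gDS v x).PosSemidef then
    (hg.1.eigenvectorUnitary.1 * Matrix.diagonal (fun i => Real.sqrt (hg.1.eigenvalues i)) *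
      (star hg.1.eigenvectorUnitary : Matrix (Fin n) (Fin n) ℝ))⁻¹ * hDS v x *
    (hg.1.eigenvectorUnitary.1 * Matrix.diagonal (fun i => Real.sqrt (hg.1.eigenvalues i)) *
      (star hg.1.eigenvectorUnitary : Matrix (Fin n) (Fin n) ℝ))⁻¹ else 0

/-- The normalized `k`-th elementary symmetric function `H_k = e_k / C(n,k)`. -/
def Hk (n k : ℕ) (l : Fin n → ℝ) : ℝ :=
  (∑ s ∈ Finset.powersetCard k (Finset.univ : Finset (Fin n)), ∏ i ∈ s, l i) / (n.choose k)

end DeSitter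
end

open Matrix

theorem one_sub_smul_mul_one_add_mul_one_sub_smul {A : Type*} [Ring A] [Algebra ℝ A] {P : A}
    {s : ℝ} (hs : 0 ≤ s) (hP : P * P = s • P) :
    (1 - (√(1 + s) * (1 + √(1 + s)))⁻¹ • P) * (1 + P) *
      (1 - (√(1 + s) * (1 + √(1 + s)))⁻¹ • P) = 1 := by
  set w := √(1 + s)
  have hw : w ^ 2 = 1 + s := Real.sq_sqrt (by linarith)
  have hw0 : 0 < w := Real.sqrt_pos.2 (by linarith)
  set c := (w * (1 + w))⁻¹
  have hc : (1 - c - c * s) * (1 - c * s) - c = 0 := by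
    have : s = w ^ 2 - 1 := by linarith
    simp only [c, this]
    field_simp
    ring
  calc (1 - c • P) * (1 + P) * (1 - c • P)
      = 1 + ((1 - c - c * s) * (1 - c * s) - c) • P := by
        simp only [sub_mul, mul_sub, add_mul, mul_add, one_mul, mul_one, smul_mul_assoc,
          mul_smul_comm, hP, smul_smul]
        module
    _ = 1 := by rw [hc, zero_smul, add_zero]

theorem posDef_smul_iff {ι : Type*} {c : ℝ} (hc : 0 < c) {A : Matrix ι ι ℝ} :
    (c • A).PosDef ↔ A.PosDef :=
  ⟨fun h => by simpa [smul_smul, hc.ne'] using h.smul (inv_pos.2 hc), fun h => h.smul hc⟩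

section gamma

variable {ι : Type*} [Fintype ι]

theorem vecMulVec_self_mul_self (p : ι → ℝ) :
    vecMulVec p p * vecMulVec p p = (∑ i, p i ^ 2) • vecMulVec p p := by
  simp only [vecMulVec_mul_vecMulVec, vecMulVec_smul, dotProduct, sq]

variable [DecidableEq ι]

noncomputable def gammaOf (p : ι → ℝ) : Matrix ι ι ℝ :=
  1 - (√(1 + ∑ i, p i ^ 2) * (1 + √(1 + ∑ i, p i ^ 2)))⁻¹ • vecMulVec p p

theorem gammaOf_mul_one_add_vecMulVec_mul_gammaOf (p : ι → ℝ) :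
    gammaOf p * (1 + vecMulVec p p) * gammaOf p = 1 :=
  one_sub_smul_mul_one_add_mul_one_sub_smul (by positivity) (vecMulVec_self_mul_self p)

theorem conjTranspose_gammaOf (p : ι → ℝ) : (gammaOf p)ᴴ = gammaOf p := by
  simp [gammaOf]

/-- If `γ` is a symmetric square root of `(1 + P)⁻¹`, then `1 + t γ B γ = γ (1 + P + t B) γ`. -/
theorem posDef_smul_one_add_smul_conj_iff {γ P B : Matrix ι ι ℝ} (hγ : γᴴ = γ)
    (hγP : γ * (1 + P) * γ = 1) {c : ℝ} (hc : 0 < c) (t : ℝ) :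
    (c • (1 + t • (γ * B * γ))).PosDef ↔ (1 + P + t • B).PosDef := by
  have hconj : 1 + t • (γ * B * γ) = star γ * (1 + P + t • B) * γ := by
    rw [star_eq_conjTranspose, hγ, mul_add, add_mul, hγP, mul_smul_comm, smul_mul_assoc]
  have hunit : IsUnit γ := IsUnit.of_mul_eq_one ((1 + P) * γ) (by rw [← mul_assoc, hγP])
  rw [posDef_smul_iff hc, hconj, hunit.posDef_star_left_conjugate_iff]

end gamma

section graph

variable {n : ℕ}

theorem gammaM_eq_gammaOf (u : En n → ℝ) (x : En n) : gammaM u x = gammaOf (Dg u x) := rfl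

theorem wG_pos (u : En n → ℝ) (x : En n) : 0 < wG u x :=
  Real.sqrt_pos.2 (by positivity)

theorem fderiv_sq_add_sum_sq_single {u : En n → ℝ} {y : En n} (hu : DifferentiableAt ℝ u y)
    (j : Fin n) :
    fderiv ℝ (fun z => u z ^ 2 + ∑ k, z k ^ 2) y (EuclideanSpace.single j 1)
      = 2 * u y * fderiv ℝ u y (EuclideanSpace.single j 1) + 2 * y j := by
  have h : HasFDerivAt (fun z : En n => u z ^ 2 + ∑ k, z k ^ 2) _ y :=
    (hu.hasFDerivAt.pow 2).fun_add (HasFDerivAt.fun_sum (u := Finset.univ) fun k _ =>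
      ((EuclideanSpace.proj k : En n →L[ℝ] ℝ).hasFDerivAt (x := y)).pow 2)
  rw [h.fderiv]
  simp [PiLp.single_apply]

theorem Dh_sq_add_sum_sq {u : En n → ℝ} {x : En n} (hu : ContDiffAt ℝ 2 u x) :
    Dh (fun y => u y ^ 2 + ∑ k, y k ^ 2) x
      = (2 : ℝ) • (1 + vecMulVec (Dg u x) (Dg u x) + u x • Dh u x) := by
  ext i j
  have hdiff : ∀ᶠ y in 𝓝 x, DifferentiableAt ℝ u y :=
    (hu.eventually (by simp)).mono fun y hy => hy.differentiableAt (by simp)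
  have hfirst :
      (fun y => fderiv ℝ (fun z => u z ^ 2 + ∑ k, z k ^ 2) y (EuclideanSpace.single j 1))
      =ᶠ[𝓝 x] fun y => 2 * u y * fderiv ℝ u y (EuclideanSpace.single j 1) + 2 * y j :=
    hdiff.mono fun y hy => fderiv_sq_add_sum_sq_single hy j
  have hpartial : DifferentiableAt ℝ (fun y => fderiv ℝ u y (EuclideanSpace.single j 1)) x :=
    ((hu.fderiv_right (m := 1) le_rfl).differentiableAt one_ne_zero).clm_apply
      (differentiableAt_const _)
  have h : HasFDerivAt
      (fun y : En n => 2 * u y * fderiv ℝ u y (EuclideanSpace.single j 1) + 2 * y j) _ x :=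
    ((hdiff.self_of_nhds.hasFDerivAt.const_mul 2).mul hpartial.hasFDerivAt).add
      (((EuclideanSpace.proj j : En n →L[ℝ] ℝ).hasFDerivAt (x := x)).const_mul 2)
  change fderiv ℝ (fun y => fderiv ℝ (fun z => u z ^ 2 + ∑ k, z k ^ 2) y
    (EuclideanSpace.single j 1)) x (EuclideanSpace.single i 1) = _
  rw [hfirst.fderiv_eq, h.fderiv]
  by_cases hij : i = j <;> simp [hij, Dg, Dh, one_apply, vecMulVec_apply] <;> ring

end graph

theorem stmt_19_general (n : ℕ) (p : Fin n → ℝ) :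
    ((1 - (Real.sqrt (1 + ∑ i, p i ^ 2) * (1 + Real.sqrt (1 + ∑ i, p i ^ 2)))⁻¹ •
          Matrix.of (fun i j => p i * p j) : Matrix (Fin n) (Fin n) ℝ) *
        (1 + Matrix.of (fun i j => p i * p j)) *
        (1 - (Real.sqrt (1 + ∑ i, p i ^ 2) * (1 + Real.sqrt (1 + ∑ i, p i ^ 2)))⁻¹ •
          Matrix.of (fun i j => p i * p j)) = 1) ∧
    ∀ (Ω : Set (En n)), IsOpen Ω → ∀ u : En n → ℝ, ContDiffOn ℝ 2 u Ω →
      (∀ x ∈ Ω, 0 < u x) → ∀ x ∈ Ω,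
        (Matrix.of (fun i j => (if i = j then (1 : ℝ) else 0)
            + Dg u x i * Dg u x j + u x * Dh u x i j)
          = (2 : ℝ)⁻¹ • Dh (fun y => u y ^ 2 + ∑ i, y i ^ 2) x) ∧
        ((hypA u x).PosDef ↔
          (Matrix.of (fun i j => (if i = j then (1 : ℝ) else 0)
            + Dg u x i * Dg u x j + u x * Dh u x i j)).PosDef) := by
  refine ⟨gammaOf_mul_one_add_vecMulVec_mul_gammaOf p, fun Ω hΩ u hu _ x hx => ?_⟩
  have hM : Matrix.of (fun i j => (if i = j then (1 : ℝ) else 0)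
      + Dg u x i * Dg u x j + u x * Dh u x i j)
      = 1 + vecMulVec (Dg u x) (Dg u x) + u x • Dh u x := by
    ext i j
    simp [one_apply, vecMulVec_apply]
  rw [hM, Dh_sq_add_sum_sq (hu.contDiffAt (hΩ.mem_nhds hx)), inv_smul_smul₀ two_ne_zero,
    hypA, gammaM_eq_gammaOf]
  exact ⟨rfl, posDef_smul_one_add_smul_conj_iff (conjTranspose_gammaOf _)
    (gammaOf_mul_one_add_vecMulVec_mul_gammaOf _) (inv_pos.2 (wG_pos u x)) (u x)⟩

/-- `γ = I − p pᵀ/(w(1+w))` is the inverse square root of `I + p pᵀ`; consequently `A[u]` is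
positive definite exactly when `I + Du Duᵀ + u D²u` — one half the Hessian of `u² + |x|²` —
is positive definite, i.e. the graph of `u` is locally strictly convex in `ℍⁿ⁺¹` exactly when
`u² + |x|²` is strictly convex. -/
theorem stmt_19 (n : ℕ) (hn : 1 ≤ n) (p : Fin n → ℝ) :
    ((1 - (Real.sqrt (1 + ∑ i, p i ^ 2) * (1 + Real.sqrt (1 + ∑ i, p i ^ 2)))⁻¹ •
          Matrix.of (fun i j => p i * p j) : Matrix (Fin n) (Fin n) ℝ) *
        (1 + Matrix.of (fun i j => p i * p j)) *
        (1 - (Real.sqrt (1 + ∑ i, p i ^ 2) * (1 + Real.sqrt (1 + ∑ i, p i ^ 2)))⁻¹ •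
          Matrix.of (fun i j => p i * p j)) = 1) ∧
    ∀ (Ω : Set (En n)), IsOpen Ω → ∀ u : En n → ℝ, ContDiffOn ℝ 2 u Ω →
      (∀ x ∈ Ω, 0 < u x) → ∀ x ∈ Ω,
        (Matrix.of (fun i j => (if i = j then (1 : ℝ) else 0)
            + Dg u x i * Dg u x j + u x * Dh u x i j)
          = (2 : ℝ)⁻¹ • Dh (fun y => u y ^ 2 + ∑ i, y i ^ 2) x) ∧
        ((hypA u x).PosDef ↔
          (Matrix.of (fun i j => (if i = j then (1 : ℝ) else 0)
            + Dg u x i * Dg u x j + u x * Dh u x i j)).PosDef) :=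
  stmt_19_general n p
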